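/- (Entry of the Gr(3,7) twist table: T*(Y^{123456}) = Δ₃₄₅Δ₅₆₇·Y^{123467}.) For all vectors v₁,…,v₇ ∈ ℝ³, set w_i := v_{i+1}×v_{i+2} with indices taken modulo 7 in {1,…,7}, and write Δ_{abc} := det(v_a,v_b,v_c). Then det(w₆×w₁, w₂×w₃, w₄×w₅) = Δ₃₄₅·Δ₅₆₇·det(v₇×v₁, v₂×v₃, v₄×v₆). -/

import Mathlib

/-!
Two of the three twisted columns collapse: `(a × b) × (b × c) = det(a, b, c) b`, so
`w₂ × w₃ = Δ₃₄₅ v₄` and `w₄ × w₅ = Δ₅₆₇ v₆`. The left side is therefore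
`Δ₃₄₅ Δ₅₆₇ det((v₇ × v₁) × (v₂ × v₃), v₄, v₆)`, and the identity
`det(a, b, c × d) = (a × b) · (c × d) = det(a × b, c, d)` turns the remaining determinant
into `det(v₇ × v₁, v₂ × v₃, v₄ × v₆)`.
-/

/-- Determinant of the 3×3 real matrix with columns `a`, `b`, `c`. -/
noncomputable def det3 (a b c : Fin 3 → ℝ) : ℝ :=
  (Matrix.of ![a, b, c]).transpose.det

/-- The standard cross product on `ℝ³`. -/
def cross (a b : Fin 3 → ℝ) : Fin 3 → ℝ := crossProduct a b

open Matrix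

section CrossProduct

variable {R : Type*} [CommRing R]

theorem cross_cross_cross_eq_smul (a b c : Fin 3 → R) :
    (a ⨯₃ b) ⨯₃ (b ⨯₃ c) = (a ⬝ᵥ b ⨯₃ c) • b := by
  rw [cross_cross_eq_smul_sub_smul, dot_self_cross, zero_smul, sub_zero]

theorem dot_cross_cross_eq_cross_dot_cross (a b c d : Fin 3 → R) :
    a ⬝ᵥ b ⨯₃ (c ⨯₃ d) = (a ⨯₃ b) ⬝ᵥ (c ⨯₃ d) := by
  rw [dotProduct_comm (a ⨯₃ b), triple_product_permutation (c ⨯₃ d)]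

theorem dot_smul_cross_smul (a b c : Fin 3 → R) (s t : R) :
    a ⬝ᵥ (s • b) ⨯₃ (t • c) = s * t * (a ⬝ᵥ b ⨯₃ c) := by
  simp only [map_smul, LinearMap.smul_apply, dotProduct_smul, smul_eq_mul]
  ring

end CrossProduct

theorem det3_eq_dotProduct_cross (a b c : Fin 3 → ℝ) : det3 a b c = a ⬝ᵥ b ⨯₃ c := by
  rw [det3, det_transpose, triple_product_eq_det]
  rfl

theorem twist_Y123456_general (v₁ v₂ v₃ v₄ v₅ v₆ v₇ w₁ w₂ w₃ w₄ w₅ w₆ : Fin 3 → ℝ)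
    (hw₁ : w₁ = cross v₂ v₃) (hw₂ : w₂ = cross v₃ v₄) (hw₃ : w₃ = cross v₄ v₅)
    (hw₄ : w₄ = cross v₅ v₆) (hw₅ : w₅ = cross v₆ v₇) (hw₆ : w₆ = cross v₇ v₁) :
    det3 (cross w₆ w₁) (cross w₂ w₃) (cross w₄ w₅)
      = det3 v₃ v₄ v₅ * det3 v₅ v₆ v₇
          * det3 (cross v₇ v₁) (cross v₂ v₃) (cross v₄ v₆) := by
  subst hw₁ hw₂ hw₃ hw₄ hw₅ hw₆
  simp only [det3_eq_dotProduct_cross, cross]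
  rw [cross_cross_cross_eq_smul v₃, cross_cross_cross_eq_smul v₅,
    dot_smul_cross_smul, dot_cross_cross_eq_cross_dot_cross]

/-- Gr(3,7) twist table entry: `T*(Y^{123456}) = Δ₃₄₅Δ₅₆₇ · Y^{123467}`. -/
theorem twist_Y123456 (v₁ v₂ v₃ v₄ v₅ v₆ v₇ w₁ w₂ w₃ w₄ w₅ w₆ w₇ : Fin 3 → ℝ)
    (hw₁ : w₁ = cross v₂ v₃) (hw₂ : w₂ = cross v₃ v₄) (hw₃ : w₃ = cross v₄ v₅)
    (hw₄ : w₄ = cross v₅ v₆) (hw₅ : w₅ = cross v₆ v₇) (hw₆ : w₆ = cross v₇ v₁)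
    (hw₇ : w₇ = cross v₁ v₂) :
    det3 (cross w₆ w₁) (cross w₂ w₃) (cross w₄ w₅)
      = det3 v₃ v₄ v₅ * det3 v₅ v₆ v₇
          * det3 (cross v₇ v₁) (cross v₂ v₃) (cross v₄ v₆) :=
  twist_Y123456_general v₁ v₂ v₃ v₄ v₅ v₆ v₇ w₁ w₂ w₃ w₄ w₅ w₆ hw₁ hw₂ hw₃ hw₄ hw₅ hw₆
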